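/- Let (X,d) be a geodesic metric space that is δ-hyperbolic for some δ ≥ 0, in the sense that for all w,x,y,z ∈ X the Gromov products satisfy (x|z)_w ≥ min((x|y)_w, (y|z)_w) − δ. Then for every finite subset S ⊆ X with |S| = k there exist a metric space (T, d_T) that is 0-hyperbolic (it satisfies the same four-point condition with δ = 0) and a map Φ : S → T such that for all x, y ∈ S: d(x,y) − 2kδ ≤ d_T(Φ(x), Φ(y)) ≤ d(x,y). -/

import Mathlib

noncomputable section

/-- The Gromov product `(x|y)_w = ½(d(x,w) + d(y,w) − d(x,y))` of `x` and `y`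
with respect to the base point `w`. -/
def gromovProd {X : Type*} [MetricSpace X] (w x y : X) : ℝ :=
  (dist x w + dist y w - dist x y) / 2

/-- A metric space is `δ`-hyperbolic if the four-point condition
`(x|z)_w ≥ min((x|y)_w, (y|z)_w) − δ` holds for all `w, x, y, z`. -/
def IsDeltaHyperbolic (X : Type*) [MetricSpace X] (δ : ℝ) : Prop :=
  ∀ w x y z : X, min (gromovProd w x y) (gromovProd w y z) - δ ≤ gromovProd w x z

/-- A geodesic metric space: every pair of points is joined by a geodesic
segment, i.e. an isometric image of the interval `[0, d(x,y)]`. -/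
def IsGeodesicSpace (X : Type*) [MetricSpace X] : Prop :=
  ∀ x y : X, ∃ f : ℝ → X, f 0 = x ∧ f (dist x y) = y ∧
    ∀ s ∈ Set.Icc (0 : ℝ) (dist x y), ∀ t ∈ Set.Icc (0 : ℝ) (dist x y),
      dist (f s) (f t) = |s - t|

/-!
Fix a base point `w`. On a `k`-point set the Gromov products `(x|y)_w` satisfy the
ultrametric-type inequality `(x|z)_w ≥ min((x|y)_w, (y|z)_w)` up to `δ`. Replacing
`(x|y)_w` by its max-min closure over chains `x = x₀, x₁, …, xₙ = y` of distinct points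
makes the inequality exact, and raises each product by at most `kδ`, since a chain
has at most `k` steps. Products satisfying the exact inequality define the distances
`d(x,w) + d(y,w) - 2(x|y)` of a `0`-hyperbolic space, which therefore differ from the
original distances by at most `2kδ`.
-/

lemma List.exists_eq_append_cons_append_cons_of_not_nodup {α : Type*} {l : List α}
    (hl : ¬l.Nodup) : ∃ a l₁ l₂ l₃, l = l₁ ++ a :: (l₂ ++ a :: l₃) := by
  obtain ⟨a, ha⟩ := List.exists_duplicate_iff_not_nodup.2 hl
  obtain ⟨r₁, r₂, rfl, h₁, h₂⟩ := List.cons_sublist_iff.1 (List.duplicate_iff_sublist.1 ha)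
  obtain ⟨s, t, rfl⟩ := List.append_of_mem h₁
  obtain ⟨u, v, rfl⟩ := List.append_of_mem (List.singleton_sublist.1 h₂)
  exact ⟨a, s, t ++ u, v, by simp⟩

section MaxChainMin

variable {ι : Type*} (p : ι → ι → ℝ)

/-- `chainMin p x l y` is the minimum of `p` along consecutive points of `x :: l ++ [y]`. -/
def chainMin : ι → List ι → ι → ℝ
  | x, [], y => p x y
  | x, z :: l, y => min (p x z) (chainMin z l y)

@[simp] lemma chainMin_nil (x y : ι) : chainMin p x [] y = p x y := rfl

@[simp] lemma chainMin_cons (x z y : ι) (l : List ι) :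
    chainMin p x (z :: l) y = min (p x z) (chainMin p z l y) := rfl

lemma chainMin_append (x u y : ι) (l₁ l₂ : List ι) :
    chainMin p x (l₁ ++ u :: l₂) y = min (chainMin p x l₁ u) (chainMin p u l₂ y) := by
  induction l₁ generalizing x with
  | nil => rfl
  | cons z l ih => simp [ih, min_assoc]

lemma chainMin_reverse (hp : ∀ x y, p x y = p y x) (x y : ι) (l : List ι) :
    chainMin p x l y = chainMin p y l.reverse x := by
  induction l generalizing x with
  | nil => exact hp x y
  | cons z l ih =>
    rw [List.reverse_cons, chainMin_append, chainMin_cons, ih, chainMin_nil, hp x z, min_comm]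

lemma chainMin_le_head (x y : ι) (l : List ι) : chainMin p x l y ≤ p x (l.headD y) := by
  cases l with
  | nil => exact le_rfl
  | cons z l => exact min_le_left _ _

lemma chainMin_le_add_length_mul {δ : ℝ} (hδ : 0 ≤ δ)
    (hp : ∀ x y z, min (p x y) (p y z) - δ ≤ p x z) (x y : ι) (l : List ι) :
    chainMin p x l y ≤ p x y + l.length * δ := by
  induction l generalizing x with
  | nil => simp
  | cons z l ih =>
    have hlδ : 0 ≤ l.length * δ := by positivity
    calc chainMin p x (z :: l) y
        ≤ min (p x z + l.length * δ) (p z y + l.length * δ) :=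
          min_le_min (le_add_of_nonneg_right hlδ) (ih z)
      _ = min (p x z) (p z y) + l.length * δ := min_add_add_right _ _ _
      _ ≤ p x y + (z :: l).length * δ := by
          rw [List.length_cons, Nat.cast_succ]; linarith [hp x z y]

/-- Cutting out the loop between two occurrences of a point cannot decrease `chainMin`. -/
lemma exists_nodup_chainMin_le (x y : ι) (l : List ι) :
    ∃ l' : List ι, l'.Nodup ∧ chainMin p x l y ≤ chainMin p x l' y := by
  induction hn : l.length using Nat.strong_induction_on generalizing l with
  | _ n ih =>
    by_cases hl : l.Nodup
    · exact ⟨l, hl, le_rfl⟩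
    obtain ⟨a, l₁, l₂, l₃, rfl⟩ := List.exists_eq_append_cons_append_cons_of_not_nodup hl
    obtain ⟨l', hl', hle⟩ := ih (l₁ ++ a :: l₃).length (by simp [← hn]) _ rfl
    refine ⟨l', hl', le_trans ?_ hle⟩
    simp only [chainMin_append]
    exact min_le_min le_rfl (min_le_right _ _)

variable [Fintype ι]

def maxChainMin (x y : ι) : ℝ :=
  Finset.univ.sup' ⟨⟨[], List.nodup_nil⟩, Finset.mem_univ _⟩
    fun l : {l : List ι // l.Nodup} => chainMin p x l y

lemma chainMin_le_maxChainMin (x y : ι) (l : List ι) :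
    chainMin p x l y ≤ maxChainMin p x y := by
  obtain ⟨l', hl', hle⟩ := exists_nodup_chainMin_le p x y l
  exact hle.trans (Finset.le_sup' (fun l : {l : List ι // l.Nodup} => chainMin p x l y)
    (Finset.mem_univ ⟨l', hl'⟩) :)

lemma le_maxChainMin (x y : ι) : p x y ≤ maxChainMin p x y :=
  chainMin_le_maxChainMin p x y []

lemma exists_chainMin_eq_maxChainMin (x y : ι) :
    ∃ l : List ι, chainMin p x l y = maxChainMin p x y := by
  obtain ⟨l, -, hl⟩ := Finset.exists_mem_eq_sup' _
    fun l : {l : List ι // l.Nodup} => chainMin p x l y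
  exact ⟨l, hl.symm⟩

lemma maxChainMin_le_of_le {b : ι → ℝ} (hb : ∀ x y, p x y ≤ b x) (x y : ι) :
    maxChainMin p x y ≤ b x :=
  Finset.sup'_le _ _ fun l _ => (chainMin_le_head p x y l).trans (hb _ _)

lemma maxChainMin_le_add {δ : ℝ} (hδ : 0 ≤ δ)
    (hp : ∀ x y z, min (p x y) (p y z) - δ ≤ p x z) (x y : ι) :
    maxChainMin p x y ≤ p x y + Fintype.card ι * δ := by
  refine Finset.sup'_le _ _ fun l _ => (chainMin_le_add_length_mul p hδ hp x y l).trans ?_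
  gcongr
  exact_mod_cast l.2.length_le_card

lemma maxChainMin_comm (hp : ∀ x y, p x y = p y x) (x y : ι) :
    maxChainMin p x y = maxChainMin p y x := by
  have key : ∀ x y, maxChainMin p x y ≤ maxChainMin p y x := fun x y =>
    Finset.sup'_le _ _ fun l _ =>
      (chainMin_reverse p hp x y l).trans_le (chainMin_le_maxChainMin p y x _)
  exact le_antisymm (key x y) (key y x)

lemma min_maxChainMin_le (x y z : ι) :
    min (maxChainMin p x y) (maxChainMin p y z) ≤ maxChainMin p x z := by
  obtain ⟨l₁, hl₁⟩ := exists_chainMin_eq_maxChainMin p x y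
  obtain ⟨l₂, hl₂⟩ := exists_chainMin_eq_maxChainMin p y z
  rw [← hl₁, ← hl₂, ← chainMin_append]
  exact chainMin_le_maxChainMin p x z _

end MaxChainMin

/-- The Gromov products, based at a root, of points of a `0`-hyperbolic space;
`height x` stands for the distance from `x` to the root. -/
structure GromovTreeData (ι : Type*) where
  height : ι → ℝ
  prod : ι → ι → ℝ
  prod_comm : ∀ x y, prod x y = prod y x
  prod_le_height : ∀ x y, prod x y ≤ height x
  prod_self : ∀ x, prod x x = height x
  min_prod_le : ∀ x y z, min (prod x y) (prod y z) ≤ prod x z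

namespace GromovTreeData

variable {ι : Type*} (K : GromovTreeData ι)

def Space (_ : GromovTreeData ι) : Type _ := ι

instance : PseudoMetricSpace K.Space where
  dist x y := K.height x + K.height y - 2 * K.prod x y
  dist_self x := by linarith [K.prod_self x]
  dist_comm x y := by linarith [K.prod_comm x y]
  dist_triangle x y z := by
    have hmax : max (K.prod x y) (K.prod y z) ≤ K.height y :=
      max_le (K.prod_comm x y ▸ K.prod_le_height y x) (K.prod_le_height y z)
    linarith [K.min_prod_le x y z, min_add_max (K.prod x y) (K.prod y z)]

abbrev Tree : Type _ := SeparationQuotient K.Space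

def toTree (i : ι) : K.Tree := @SeparationQuotient.mk K.Space _ i

lemma toTree_surjective : Function.Surjective K.toTree :=
  @SeparationQuotient.surjective_mk K.Space _

lemma dist_toTree (x y : ι) :
    dist (K.toTree x) (K.toTree y) = K.height x + K.height y - 2 * K.prod x y :=
  SeparationQuotient.dist_mk _ _

lemma min_prod_add_prod_le (x y z w : ι) :
    min (K.prod x y + K.prod z w) (K.prod y z + K.prod x w) ≤ K.prod x z + K.prod y w := by
  have := K.min_prod_le x y z
  have := K.min_prod_le y z w
  have := K.min_prod_le y x w
  have := K.min_prod_le x w z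
  have := K.prod_comm x y
  have := K.prod_comm w z
  grind

lemma gromovProd_toTree (a x y : ι) :
    gromovProd (K.toTree a) (K.toTree x) (K.toTree y) =
      K.height a + K.prod x y - K.prod x a - K.prod y a := by
  simp only [gromovProd, dist_toTree]
  ring

theorem isDeltaHyperbolic_zero : IsDeltaHyperbolic K.Tree 0 := by
  intro w x y z
  obtain ⟨a, rfl⟩ := K.toTree_surjective w
  obtain ⟨x, rfl⟩ := K.toTree_surjective x
  obtain ⟨y, rfl⟩ := K.toTree_surjective y
  obtain ⟨z, rfl⟩ := K.toTree_surjective z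
  rw [sub_zero, gromovProd_toTree, gromovProd_toTree, gromovProd_toTree]
  set c := K.height a - K.prod x a - K.prod y a - K.prod z a
  calc min (K.height a + K.prod x y - K.prod x a - K.prod y a)
        (K.height a + K.prod y z - K.prod y a - K.prod z a)
      = min (K.prod x y + K.prod z a) (K.prod y z + K.prod x a) + c := by
        rw [← min_add_add_right]
        congr 1 <;> ring
    _ ≤ K.prod x z + K.prod y a + c := by gcongr; exact K.min_prod_add_prod_le x y z a
    _ = K.height a + K.prod x z - K.prod x a - K.prod z a := by ring

end GromovTreeData

section GromovProduct

variable {X : Type*} [MetricSpace X]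

lemma gromovProd_comm (w x y : X) : gromovProd w x y = gromovProd w y x := by
  unfold gromovProd
  rw [dist_comm x y, add_comm (dist x w)]

lemma gromovProd_le_dist_left (w x y : X) : gromovProd w x y ≤ dist x w := by
  unfold gromovProd
  linarith [dist_triangle y x w, dist_comm x y]

lemma gromovProd_self (w x : X) : gromovProd w x x = dist x w := by
  unfold gromovProd
  rw [dist_self]
  ring

lemma dist_eq_sub_gromovProd (w x y : X) :
    dist x y = dist x w + dist y w - 2 * gromovProd w x y := by
  unfold gromovProd
  ring

variable {ι : Type*} [Fintype ι]

lemma maxChainMin_gromovProd_le (w : X) (f : ι → X) (i j : ι) :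
    maxChainMin (fun i j => gromovProd w (f i) (f j)) i j ≤ dist (f i) w :=
  maxChainMin_le_of_le _ (b := fun i => dist (f i) w) (fun _ _ => gromovProd_le_dist_left _ _ _) i j

def gromovTreeData (w : X) (f : ι → X) : GromovTreeData ι where
  height i := dist (f i) w
  prod := maxChainMin fun i j => gromovProd w (f i) (f j)
  prod_comm := maxChainMin_comm _ fun _ _ => gromovProd_comm _ _ _
  prod_le_height := maxChainMin_gromovProd_le w f
  prod_self i := (maxChainMin_gromovProd_le w f i i).antisymm <| by
    simpa only [gromovProd_self] using le_maxChainMin (fun i j => gromovProd w (f i) (f j)) i i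
  min_prod_le := min_maxChainMin_le _

lemma dist_gromovTreeData_le (w : X) (f : ι → X) (i j : ι) :
    dist ((gromovTreeData w f).toTree i) ((gromovTreeData w f).toTree j) ≤ dist (f i) (f j) := by
  rw [GromovTreeData.dist_toTree, dist_eq_sub_gromovProd w]
  have := le_maxChainMin (fun i j => gromovProd w (f i) (f j)) i j
  simp only [gromovTreeData]
  linarith

lemma dist_sub_le_dist_gromovTreeData {δ : ℝ} (hδ : 0 ≤ δ) (hX : IsDeltaHyperbolic X δ)
    (w : X) (f : ι → X) (i j : ι) :
    dist (f i) (f j) - 2 * Fintype.card ι * δ ≤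
      dist ((gromovTreeData w f).toTree i) ((gromovTreeData w f).toTree j) := by
  rw [GromovTreeData.dist_toTree, dist_eq_sub_gromovProd w]
  have := maxChainMin_le_add (fun i j => gromovProd w (f i) (f j)) hδ
    (fun x y z => hX w (f x) (f y) (f z)) i j
  simp only [gromovTreeData]
  linarith

end GromovProduct

theorem gromov_tree_approximation_general {X : Type*} [MetricSpace X]
    (δ : ℝ) (hδ : 0 ≤ δ) (hhyp : IsDeltaHyperbolic X δ)
    (S : Finset X) (k : ℕ) (hk : S.card = k) :
    ∃ (T : Type) (_ : MetricSpace T) (Φ : S → T),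
      IsDeltaHyperbolic T 0 ∧
      ∀ x y : S, dist (x : X) (y : X) - 2 * k * δ ≤ dist (Φ x) (Φ y) ∧
        dist (Φ x) (Φ y) ≤ dist (x : X) (y : X) := by
  rcases isEmpty_or_nonempty X with hX | ⟨⟨w⟩⟩
  · exact ⟨Empty, inferInstance, fun x => isEmptyElim (x : X), fun w => w.elim,
      fun x => isEmptyElim (x : X)⟩
  let e := S.equivFin
  let f : Fin S.card → X := fun i => e.symm i
  let K := gromovTreeData w f
  have hcard : Fintype.card (Fin S.card) = k := by simp [hk]
  refine ⟨K.Tree, inferInstance, K.toTree ∘ e, K.isDeltaHyperbolic_zero, fun x y => ⟨?_, ?_⟩⟩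
  · simpa [f, hcard] using dist_sub_le_dist_gromovTreeData hδ hhyp w f (e x) (e y)
  · simpa [f] using dist_gromovTreeData_le w f (e x) (e y)

/-- **Gromov's tree approximation theorem.** If `(X, d)` is a geodesic metric
space that is `δ`-hyperbolic for some `δ ≥ 0`, then for every finite subset
`S ⊆ X` with `|S| = k` there exist a `0`-hyperbolic metric space `T` and a map
`Φ : S → T` such that `d(x,y) − 2kδ ≤ d_T(Φ(x), Φ(y)) ≤ d(x,y)` for all
`x, y ∈ S`. -/
theorem gromov_tree_approximation {X : Type*} [MetricSpace X]
    (δ : ℝ) (hδ : 0 ≤ δ) (hgeo : IsGeodesicSpace X) (hhyp : IsDeltaHyperbolic X δ)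
    (S : Finset X) (k : ℕ) (hk : S.card = k) :
    ∃ (T : Type) (_ : MetricSpace T) (Φ : S → T),
      IsDeltaHyperbolic T 0 ∧
      ∀ x y : S, dist (x : X) (y : X) - 2 * k * δ ≤ dist (Φ x) (Φ y) ∧
        dist (Φ x) (Φ y) ≤ dist (x : X) (y : X) :=
  gromov_tree_approximation_general δ hδ hhyp S k hk
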